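/- Splitting degenerate eigenvalues: let N be a finite-dimensional subspace of L²(Ω) of dimension h ≥ 2 with a basis {f₁,…,f_h} of essentially bounded functions. Then there exists σ ∈ L^∞(Ω) (namely σ = f_j f_k for some j ≠ k) such that the self-adjoint operator G_σ : N → N defined by (G_σ f, g)_{L²} = −∫_Ω σ f g dx is not a scalar multiple of the identity, hence has at least two distinct eigenvalues. -/

import Mathlib

/-!
Take `σ = f_j f_k` with `j ≠ k`. The `(j, k)` entry of the matrix of `G_σ` is
`-∫ (f_j f_k)² < 0`, so this symmetric matrix is not scalar; and by the spectral theorem a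
symmetric matrix with a single eigenvalue is scalar.
-/

open MeasureTheory Module.End
open scoped ENNReal

theorem Matrix.ne_smul_one_of_apply_ne_zero {α n : Type*} [MulZeroOneClass α] [DecidableEq n]
    {A : Matrix n n α} {j k : n} (hjk : j ≠ k) (hA : A j k ≠ 0) : ¬∃ c : α, A = c • 1 := by
  rintro ⟨c, rfl⟩
  simp [Matrix.one_apply_ne hjk] at hA

namespace Matrix.IsHermitian

variable {𝕜 n : Type*} [RCLike 𝕜] [Fintype n] [DecidableEq n] {A : Matrix n n 𝕜}

theorem hasEigenvalue_toLin'_iff (hA : A.IsHermitian) {a : ℝ} :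
    HasEigenvalue (toLin' A) (a : 𝕜) ↔ a ∈ Set.range hA.eigenvalues := by
  rw [hasEigenvalue_iff_mem_spectrum, spectrum_toLin', hA.spectrum_eq_image_range,
    RCLike.ofReal_injective.mem_set_image]

theorem eq_smul_one_of_eigenvalues_eq (hA : A.IsHermitian) {c : ℝ}
    (hc : ∀ i, hA.eigenvalues i = c) : A = (c : 𝕜) • 1 := by
  have hdiag : diagonal (RCLike.ofReal ∘ hA.eigenvalues) = (c : 𝕜) • (1 : Matrix n n 𝕜) := by
    ext i j
    simp [hc, diagonal_apply, one_apply]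
  rw [hA.spectral_theorem, hdiag, map_smul, map_one]

theorem exists_hasEigenvalue_ne_of_ne_smul_one (hA : A.IsHermitian) (hns : ¬∃ c : 𝕜, A = c • 1) :
    ∃ a b : ℝ, a ≠ b ∧ HasEigenvalue (toLin' A) (a : 𝕜) ∧ HasEigenvalue (toLin' A) (b : 𝕜) := by
  simp only [hA.hasEigenvalue_toLin'_iff]
  by_contra hall
  refine hns ?_
  rcases isEmpty_or_nonempty n with hn | ⟨⟨i⟩⟩
  · exact ⟨0, Subsingleton.elim _ _⟩
  · refine ⟨_, hA.eq_smul_one_of_eigenvalues_eq (c := hA.eigenvalues i) fun j => ?_⟩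
    by_contra hji
    exact hall ⟨_, _, hji, ⟨j, rfl⟩, ⟨i, rfl⟩⟩

end Matrix.IsHermitian

section

variable {α : Type*} [MeasurableSpace α] {μ : Measure α}

theorem integrable_mul_of_integrable_mul_self {f g : α → ℝ} (hf : AEStronglyMeasurable f μ)
    (hg : AEStronglyMeasurable g μ) (hff : Integrable (fun x => f x * f x) μ)
    (hgg : Integrable (fun x => g x * g x) μ) : Integrable (fun x => f x * g x) μ := by
  simp only [← sq] at hff hgg
  exact ((memLp_two_iff_integrable_sq hf).2 hff).integrable_mul
    ((memLp_two_iff_integrable_sq hg).2 hgg)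

theorem integral_mul_self_pos {g : α → ℝ} (hg : Integrable (fun x => g x * g x) μ)
    (hg0 : ¬g =ᵐ[μ] 0) : 0 < ∫ x, g x * g x ∂μ := by
  refine (integral_nonneg fun x => mul_self_nonneg (g x)).lt_of_ne fun h => hg0 ?_
  filter_upwards [(integral_eq_zero_iff_of_nonneg (fun x => mul_self_nonneg (g x)) hg).1 h.symm]
    with x hx using mul_self_eq_zero.1 hx

end

section

variable {α ι : Type*} [MeasurableSpace α] {μ : Measure α}

/-- The matrix of `G_σ`, `(G_σ u, v) = -∫ σ u v`, in the basis `f`. -/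
noncomputable def perturbationMatrix (μ : Measure α) (σ : α → ℝ) (f : ι → α → ℝ) : Matrix ι ι ℝ :=
  Matrix.of fun j k => -∫ x, σ x * f j x * f k x ∂μ

theorem perturbationMatrix_isHermitian (σ : α → ℝ) (f : ι → α → ℝ) :
    (perturbationMatrix μ σ f).IsHermitian := by
  ext j k
  simp only [perturbationMatrix, Matrix.conjTranspose_apply, Matrix.of_apply, star_trivial,
    mul_right_comm]

theorem perturbationMatrix_mul_apply_neg {f : ι → α → ℝ} {j k : ι}
    (hint : Integrable (fun x => (f j x * f k x) * (f j x * f k x)) μ)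
    (hnz : ¬(fun x => f j x * f k x) =ᵐ[μ] 0) :
    perturbationMatrix μ (fun x => f j x * f k x) f j k < 0 := by
  simpa only [perturbationMatrix, Matrix.of_apply, ← mul_assoc, neg_lt_zero]
    using integral_mul_self_pos hint hnz

end

theorem stmt_19_general (E : Type*) [MeasurableSpace E]
    (μ : MeasureTheory.Measure E) (Ω : Set E)
    (h : ℕ) (hh : 2 ≤ h)
    (f : Fin h → E → ℝ)
    (hbdd : ∀ j, MemLp (f j) ∞ (μ.restrict Ω))
    (honb : ∀ j k, ∫ x in Ω, f j x * f k x ∂μ = if j = k then (1 : ℝ) else 0)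
    (hnz : ∀ j k, j ≠ k →
      ¬ (fun x => f j x * f k x) =ᵐ[μ.restrict Ω] (0 : E → ℝ)) :
    ∃ σ : E → ℝ, MemLp σ ∞ (μ.restrict Ω) ∧
      (∃ j k : Fin h, j ≠ k ∧ σ = fun x => f j x * f k x) ∧
      (¬ ∃ c : ℝ,
        (Matrix.of fun j k : Fin h => -∫ x in Ω, σ x * f j x * f k x ∂μ) =
          c • (1 : Matrix (Fin h) (Fin h) ℝ)) ∧
      (∃ a b : ℝ, a ≠ b ∧
        Module.End.HasEigenvalue (Matrix.toLin'
          (Matrix.of fun j k : Fin h => -∫ x in Ω, σ x * f j x * f k x ∂μ)) a ∧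
        Module.End.HasEigenvalue (Matrix.toLin'
          (Matrix.of fun j k : Fin h => -∫ x in Ω, σ x * f j x * f k x ∂μ)) b) := by
  obtain ⟨j, k, hjk⟩ : ∃ j k : Fin h, j ≠ k :=
    ⟨⟨0, by omega⟩, ⟨1, by omega⟩, by simp [Fin.ext_iff]⟩
  -- `∫ f_i² = 1 ≠ 0` forces integrability, since non-integrable functions have integral `0`
  have hsq : ∀ i, Integrable (fun x => f i x * f i x) (μ.restrict Ω) := fun i =>
    .of_integral_ne_zero (by simp [honb])
  set σ : E → ℝ := fun x => f j x * f k x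
  have hσ_top : MemLp σ ∞ (μ.restrict Ω) := (hbdd k).mul (hbdd j)
  have hσ : Integrable σ (μ.restrict Ω) :=
    integrable_mul_of_integrable_mul_self (hbdd j).1 (hbdd k).1 (hsq j) (hsq k)
  have hns : ¬∃ c : ℝ, perturbationMatrix (μ.restrict Ω) σ f = c • 1 :=
    Matrix.ne_smul_one_of_apply_ne_zero hjk
      (perturbationMatrix_mul_apply_neg (hσ.mul_of_top_left hσ_top) (hnz j k hjk)).ne
  obtain ⟨a, b, hab, ha, hb⟩ :=
    (perturbationMatrix_isHermitian σ f).exists_hasEigenvalue_ne_of_ne_smul_one hns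
  exact ⟨σ, hσ_top, ⟨j, k, hjk, rfl⟩, hns, a, b, hab, ha, hb⟩

/-- **Splitting degenerate eigenvalues** (key algebraic step of Theorem 4.2): let
`N ⊆ L²(Ω)` be an `h`-dimensional subspace, `h ≥ 2`, with an `L²(Ω)`-orthonormal
basis `f_1, …, f_h` of essentially bounded functions such that `f_j f_k ≢ 0` for
`j ≠ k` (as holds for eigenfunctions, by unique continuation).  Then there is
`σ ∈ L^∞(Ω)` — namely `σ = f_j f_k` for some `j ≠ k` — such that the
self-adjoint operator `G_σ : N → N`, `(G_σ f, g)_{L²} = −∫_Ω σ f g`, represented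
in the basis `{f_j}` by the symmetric matrix `M σ = (−∫_Ω σ f_j f_k)_{jk}`, is
not a scalar multiple of the identity, and hence has at least two distinct
eigenvalues. -/
theorem stmt_19 (E : Type*) [NormedAddCommGroup E] [MeasurableSpace E]
    (μ : MeasureTheory.Measure E) (Ω : Set E) (hΩ : MeasurableSet Ω)
    (h : ℕ) (hh : 2 ≤ h)
    (f : Fin h → E → ℝ)
    (hbdd : ∀ j, MemLp (f j) ∞ (μ.restrict Ω))
    (honb : ∀ j k, ∫ x in Ω, f j x * f k x ∂μ = if j = k then (1 : ℝ) else 0)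
    (hnz : ∀ j k, j ≠ k →
      ¬ (fun x => f j x * f k x) =ᵐ[μ.restrict Ω] (0 : E → ℝ)) :
    ∃ σ : E → ℝ, MemLp σ ∞ (μ.restrict Ω) ∧
      (∃ j k : Fin h, j ≠ k ∧ σ = fun x => f j x * f k x) ∧
      (¬ ∃ c : ℝ,
        (Matrix.of fun j k : Fin h => -∫ x in Ω, σ x * f j x * f k x ∂μ) =
          c • (1 : Matrix (Fin h) (Fin h) ℝ)) ∧
      (∃ a b : ℝ, a ≠ b ∧
        Module.End.HasEigenvalue (Matrix.toLin'
          (Matrix.of fun j k : Fin h => -∫ x in Ω, σ x * f j x * f k x ∂μ)) a ∧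
        Module.End.HasEigenvalue (Matrix.toLin'
          (Matrix.of fun j k : Fin h => -∫ x in Ω, σ x * f j x * f k x ∂μ)) b) :=
  stmt_19_general E μ Ω h hh f hbdd honb hnz
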